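/- Let 0<s<1 and let N be an integer with N>2s. Define Φ_{N,s}(γ) := 2^{2s} ( Γ((γ+2s)/2) Γ((N-γ)/2) / ( Γ((N-γ-2s)/2) Γ(γ/2) ) − Γ((N+2s)/4)² / Γ((N-2s)/4)² ) for 0 < γ ≤ (N-2s)/2 and Ψ_{N,s}(γ) := Λ_{N,s} + Φ_{N,s}(γ), extended by Ψ_{N,s}(0) := 0. Then Ψ_{N,s} : [0,(N-2s)/2] → [0, Λ_{N,s}] is strictly increasing and surjective; in particular Ψ_{N,s}((N-2s)/2) = Λ_{N,s} and Ψ_{N,s}(γ) → 0 as γ → 0⁺. -/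

import Mathlib

open MeasureTheory Real Filter

noncomputable section

/-- The best constant in the fractional Hardy inequality:
`Λ_{N,s} = 2^{2s} Γ((N+2s)/4)² / Γ((N-2s)/4)²`. -/
def hardyConst (N : ℕ) (s : ℝ) : ℝ :=
  2 ^ (2 * s) * Real.Gamma (((N : ℝ) + 2 * s) / 4) ^ 2 /
    Real.Gamma (((N : ℝ) - 2 * s) / 4) ^ 2

/-- The ground state correction
`Φ_{N,s}(γ) = 2^{2s} ( Γ((γ+2s)/2)Γ((N-γ)/2) / (Γ((N-γ-2s)/2)Γ(γ/2)) − Γ((N+2s)/4)²/Γ((N-2s)/4)² )`. -/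
def PhiNs (N : ℕ) (s γ : ℝ) : ℝ :=
  2 ^ (2 * s) *
    (Real.Gamma ((γ + 2 * s) / 2) * Real.Gamma (((N : ℝ) - γ) / 2) /
        (Real.Gamma (((N : ℝ) - γ - 2 * s) / 2) * Real.Gamma (γ / 2)) -
      Real.Gamma (((N : ℝ) + 2 * s) / 4) ^ 2 / Real.Gamma (((N : ℝ) - 2 * s) / 4) ^ 2)

/-- `Ψ_{N,s}(γ) = Λ_{N,s} + Φ_{N,s}(γ)` for `γ ≠ 0`, extended by `Ψ_{N,s}(0) = 0`. -/
def PsiNs (N : ℕ) (s γ : ℝ) : ℝ :=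
  if γ = 0 then 0 else hardyConst N s + PhiNs N s γ

/-!
With `c = (N - 2s)/2`, `a = γ/2` and `b = c - γ/2`, one has
`Ψ_{N,s}(γ) = 2^{2s} Γ(a+s)Γ(b+s) / (Γ(a)Γ(b))`, where `a + b = c` is fixed and `ab` increases
with `γ`. By Euler's product, `Γ(a+s)Γ(b+s) / (Γ(a)Γ(b))` is the limit of
`n^{2s} ∏_{j ≤ n} P_j / (P_j + s(a+b+2j) + s²)` with `P_j = (a+j)(b+j)`, and every factor
increases with `ab` when `a + b` is fixed; so `Ψ_{N,s}` is strictly increasing. Continuity of `1/Γ`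
at `0` makes `Ψ_{N,s}` continuous on `[0, c]`, and the intermediate value theorem gives
surjectivity onto `[0, Ψ_{N,s}(c)] = [0, Λ_{N,s}]`.
-/

namespace Real

theorem continuous_inv_Gamma : Continuous fun x : ℝ => (Gamma x)⁻¹ := by
  have h : (fun x : ℝ => (Gamma x)⁻¹) = fun x : ℝ => ((Complex.Gamma (x : ℂ))⁻¹).re := by
    ext x
    rw [Complex.Gamma_ofReal, ← Complex.ofReal_inv, Complex.ofReal_re]
  rw [h]
  exact Complex.continuous_re.comp
    (Complex.differentiable_one_div_Gamma.continuous.comp Complex.continuous_ofReal)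

theorem GammaSeq_add_div_GammaSeq {a : ℝ} (ha : 0 < a) (s : ℝ) {n : ℕ} (hn : n ≠ 0) :
    GammaSeq (a + s) n / GammaSeq a n =
      (n : ℝ) ^ s * ∏ j ∈ Finset.range (n + 1), (a + j) / (a + j + s) := by
  have hn' : (0 : ℝ) < n := by positivity
  rw [GammaSeq, GammaSeq, Finset.prod_div_distrib, rpow_add hn']
  simp_rw [add_right_comm a s]
  field_simp

theorem tendsto_GammaSeq_add_div_GammaSeq {a : ℝ} (ha : 0 < a) (s : ℝ) :
    Tendsto (fun n => GammaSeq (a + s) n / GammaSeq a n) atTop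
      (nhds (Gamma (a + s) / Gamma a)) :=
  (GammaSeq_tendsto_Gamma _).div (GammaSeq_tendsto_Gamma a) (Gamma_pos_of_pos ha).ne'

end Real

theorem div_mul_prod_le_prod {f g : ℕ → ℝ} (hf : ∀ j, 0 < f j) (hfg : ∀ j, f j ≤ g j) (n : ℕ) :
    g 0 / f 0 * ∏ j ∈ Finset.range (n + 1), f j ≤ ∏ j ∈ Finset.range (n + 1), g j := by
  have hle : ∏ j ∈ Finset.range n, f (j + 1) ≤ ∏ j ∈ Finset.range n, g (j + 1) :=
    Finset.prod_le_prod (fun j _ => (hf _).le) fun j _ => hfg _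
  have hg₀ : 0 ≤ g 0 := (hf 0).le.trans (hfg 0)
  rw [Finset.prod_range_succ', Finset.prod_range_succ']
  calc g 0 / f 0 * ((∏ j ∈ Finset.range n, f (j + 1)) * f 0)
      = (∏ j ∈ Finset.range n, f (j + 1)) * g 0 := by field_simp [(hf 0).ne']
    _ ≤ (∏ j ∈ Finset.range n, g (j + 1)) * g 0 := by gcongr

theorem div_add_mul_div_add_lt {s a₁ b₁ a₂ b₂ : ℝ} (hs : 0 < s) (ha₁ : 0 < a₁) (hb₁ : 0 < b₁)
    (hsum : a₁ + b₁ = a₂ + b₂) (hprod : a₁ * b₁ < a₂ * b₂) :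
    a₁ / (a₁ + s) * (b₁ / (b₁ + s)) < a₂ / (a₂ + s) * (b₂ / (b₂ + s)) := by
  have ha₂ : 0 < a₂ := by nlinarith
  have hb₂ : 0 < b₂ := by nlinarith
  rw [div_mul_div_comm, div_mul_div_comm, div_lt_div_iff₀ (by positivity) (by positivity)]
  have key : a₂ * b₂ * ((a₁ + s) * (b₁ + s)) - a₁ * b₁ * ((a₂ + s) * (b₂ + s)) =
      (a₂ * b₂ - a₁ * b₁) * (s * (a₁ + b₁ + s)) := by
    linear_combination s * a₁ * b₁ * hsum
  nlinarith [mul_pos (sub_pos.2 hprod) (mul_pos hs (by positivity : 0 < a₁ + b₁ + s))]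

/-- Since `Gamma 0 = 0`, `gammaQuot s 0 = 0`: this junk value matches the extension `Ψ_{N,s}(0) = 0`. -/
def gammaQuot (s t : ℝ) : ℝ := Gamma (t + s) / Gamma t

theorem gammaQuot_pos {s t : ℝ} (hs : 0 < s) (ht : 0 < t) : 0 < gammaQuot s t :=
  div_pos (Gamma_pos_of_pos (by linarith)) (Gamma_pos_of_pos ht)

theorem gammaQuot_mul_gammaQuot_lt {s a₁ b₁ a₂ b₂ : ℝ} (hs : 0 < s) (ha₁ : 0 < a₁) (hb₁ : 0 < b₁)
    (hsum : a₁ + b₁ = a₂ + b₂) (hprod : a₁ * b₁ < a₂ * b₂) :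
    gammaQuot s a₁ * gammaQuot s b₁ < gammaQuot s a₂ * gammaQuot s b₂ := by
  have ha₂ : 0 < a₂ := by nlinarith
  have hb₂ : 0 < b₂ := by nlinarith
  set q : ℝ → ℝ → ℕ → ℝ := fun a b j => (a + j) / (a + j + s) * ((b + j) / (b + j + s))
  have hq_pos : ∀ j, 0 < q a₁ b₁ j := fun j => by positivity
  have hq_lt : ∀ j, q a₁ b₁ j < q a₂ b₂ j := fun j =>
    div_add_mul_div_add_lt hs (by positivity) (by positivity) (by linarith) (by nlinarith)
  set u : ℝ → ℝ → ℕ → ℝ := fun a b n =>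
    GammaSeq (a + s) n / GammaSeq a n * (GammaSeq (b + s) n / GammaSeq b n)
  have hu : ∀ {a b : ℝ}, 0 < a → 0 < b →
      Tendsto (u a b) atTop (nhds (gammaQuot s a * gammaQuot s b)) := fun ha hb =>
    (tendsto_GammaSeq_add_div_GammaSeq ha s).mul (tendsto_GammaSeq_add_div_GammaSeq hb s)
  have hu_eq : ∀ {a b : ℝ}, 0 < a → 0 < b → ∀ n ≠ 0,
      u a b n = (n : ℝ) ^ s * (n : ℝ) ^ s * ∏ j ∈ Finset.range (n + 1), q a b j := by
    intro a b ha hb n hn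
    simp only [u, q, GammaSeq_add_div_GammaSeq ha s hn, GammaSeq_add_div_GammaSeq hb s hn,
      Finset.prod_mul_distrib]
    ring
  -- The ratio of the Euler products is at least its first factor `κ > 1`.
  set κ := q a₂ b₂ 0 / q a₁ b₁ 0
  have hκ : 1 < κ := (one_lt_div (hq_pos 0)).2 (hq_lt 0)
  have hlim : κ * (gammaQuot s a₁ * gammaQuot s b₁) ≤ gammaQuot s a₂ * gammaQuot s b₂ := by
    refine le_of_tendsto_of_tendsto ((hu ha₁ hb₁).const_mul κ) (hu ha₂ hb₂) ?_
    filter_upwards [eventually_ne_atTop 0] with n hn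
    rw [hu_eq ha₁ hb₁ n hn, hu_eq ha₂ hb₂ n hn, mul_left_comm]
    gcongr
    exact div_mul_prod_le_prod hq_pos (fun j => (hq_lt j).le) n
  nlinarith [mul_pos (gammaQuot_pos hs ha₁) (gammaQuot_pos hs hb₁)]

theorem continuousAt_gammaQuot {s t : ℝ} (h : 0 < t + s) : ContinuousAt (gammaQuot s) t := by
  have hΓ : ContinuousAt Gamma (t + s) :=
    (differentiableAt_Gamma fun m => by linarith [m.cast_nonneg (α := ℝ)]).continuousAt
  exact (hΓ.comp (f := fun x => x + s) (by fun_prop)).mul continuous_inv_Gamma.continuousAt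

theorem strictMonoOn_gammaQuot_mul_gammaQuot_sub {s : ℝ} (hs : 0 < s) (σ : ℝ) :
    StrictMonoOn (fun t => gammaQuot s t * gammaQuot s (σ - t)) (Set.Icc 0 (σ / 2)) := by
  intro x hx y hy hxy
  have hy₀ : 0 < y := hx.1.trans_lt hxy
  have hσy : 0 < σ - y := by linarith [hy.2]
  rcases hx.1.eq_or_lt with rfl | hx₀
  · simpa [gammaQuot, Gamma_zero] using
      mul_pos (gammaQuot_pos hs hy₀) (gammaQuot_pos hs hσy)
  · exact gammaQuot_mul_gammaQuot_lt hs hx₀ (by linarith) (by ring)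
      (by nlinarith [hy.2])

theorem PsiNs_eq_gammaQuot (N : ℕ) (s γ : ℝ) :
    PsiNs N s γ =
      2 ^ (2 * s) * (gammaQuot s (γ / 2) * gammaQuot s (((N : ℝ) - 2 * s) / 2 - γ / 2)) := by
  rcases eq_or_ne γ 0 with rfl | hγ
  · simp [PsiNs, gammaQuot, Gamma_zero]
  rw [PsiNs, if_neg hγ, PhiNs, hardyConst, gammaQuot, gammaQuot,
    show γ / 2 + s = (γ + 2 * s) / 2 by ring,
    show ((N : ℝ) - 2 * s) / 2 - γ / 2 + s = ((N : ℝ) - γ) / 2 by ring,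
    show ((N : ℝ) - 2 * s) / 2 - γ / 2 = ((N : ℝ) - γ - 2 * s) / 2 by ring]
  ring

theorem PsiNs_eq_hardyConst (N : ℕ) (s : ℝ) :
    PsiNs N s (((N : ℝ) - 2 * s) / 2) = hardyConst N s := by
  rw [PsiNs_eq_gammaQuot, hardyConst, gammaQuot, gammaQuot,
    show ((N : ℝ) - 2 * s) / 2 - ((N : ℝ) - 2 * s) / 2 / 2 = ((N : ℝ) - 2 * s) / 4 by ring,
    show ((N : ℝ) - 2 * s) / 2 / 2 = ((N : ℝ) - 2 * s) / 4 by ring,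
    show ((N : ℝ) - 2 * s) / 4 + s = ((N : ℝ) + 2 * s) / 4 by ring]
  ring

theorem strictMonoOn_PsiNs (N : ℕ) {s : ℝ} (hs : 0 < s) :
    StrictMonoOn (PsiNs N s) (Set.Icc 0 (((N : ℝ) - 2 * s) / 2)) := by
  intro x hx y hy hxy
  simp only [PsiNs_eq_gammaQuot]
  gcongr ?_ * ?_
  exact strictMonoOn_gammaQuot_mul_gammaQuot_sub hs _ ⟨by linarith [hx.1], by linarith [hx.2]⟩
    ⟨by linarith [hy.1], by linarith [hy.2]⟩ (by linarith)

theorem continuousAt_PsiNs (N : ℕ) {s γ : ℝ} (hs : 0 < s) (hγ₀ : 0 ≤ γ)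
    (hγ : γ ≤ ((N : ℝ) - 2 * s) / 2) : ContinuousAt (PsiNs N s) γ := by
  have hΨ : PsiNs N s = fun γ =>
      2 ^ (2 * s) * (gammaQuot s (γ / 2) * gammaQuot s (((N : ℝ) - 2 * s) / 2 - γ / 2)) :=
    funext (PsiNs_eq_gammaQuot N s)
  have h₁ := continuousAt_gammaQuot (s := s) (t := γ / 2) (by linarith)
  have h₂ := continuousAt_gammaQuot (s := s) (t := ((N : ℝ) - 2 * s) / 2 - γ / 2) (by linarith)
  rw [hΨ]
  exact continuousAt_const.mul ((h₁.comp (f := fun γ => γ / 2) (by fun_prop)).mul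
    (h₂.comp (f := fun γ => ((N : ℝ) - 2 * s) / 2 - γ / 2) (by fun_prop)))

theorem PsiNs_strictMono_surjective_general (N : ℕ) (s : ℝ) (hs0 : 0 < s)
    (hN : 2 * s < (N : ℝ)) :
    StrictMonoOn (fun γ => PsiNs N s γ) (Set.Icc (0 : ℝ) (((N : ℝ) - 2 * s) / 2)) ∧
    Set.MapsTo (fun γ => PsiNs N s γ) (Set.Icc (0 : ℝ) (((N : ℝ) - 2 * s) / 2))
      (Set.Icc (0 : ℝ) (hardyConst N s)) ∧
    Set.SurjOn (fun γ => PsiNs N s γ) (Set.Icc (0 : ℝ) (((N : ℝ) - 2 * s) / 2))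
      (Set.Icc (0 : ℝ) (hardyConst N s)) ∧
    PsiNs N s (((N : ℝ) - 2 * s) / 2) = hardyConst N s ∧
    Tendsto (fun γ => PsiNs N s γ) (nhdsWithin 0 (Set.Ioi (0 : ℝ))) (nhds 0) := by
  have hc : 0 ≤ ((N : ℝ) - 2 * s) / 2 := by linarith
  have h₀ : PsiNs N s 0 = 0 := by simp [PsiNs]
  have hmono := strictMonoOn_PsiNs N hs0
  have hend := PsiNs_eq_hardyConst N s
  refine ⟨hmono, fun γ hγ => ⟨?_, ?_⟩, ?_, hend, ?_⟩
  · exact h₀ ▸ hmono.monotoneOn ⟨le_rfl, hc⟩ hγ hγ.1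
  · exact hend ▸ hmono.monotoneOn hγ ⟨hc, le_rfl⟩ hγ.2
  · have hivt := intermediate_value_Icc hc fun γ hγ =>
      (continuousAt_PsiNs N hs0 hγ.1 hγ.2).continuousWithinAt
    rwa [h₀, hend] at hivt
  · simpa only [h₀] using
      (continuousAt_PsiNs N hs0 le_rfl hc).tendsto.mono_left nhdsWithin_le_nhds

/-- For `0 < s < 1`, `N > 2s`: `Ψ_{N,s} : [0,(N-2s)/2] → [0,Λ_{N,s}]` is strictly increasing
and surjective; in particular `Ψ_{N,s}((N-2s)/2) = Λ_{N,s}` and `Ψ_{N,s}(γ) → 0` as `γ → 0⁺`. -/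
theorem PsiNs_strictMono_surjective (N : ℕ) (s : ℝ) (hs0 : 0 < s) (hs1 : s < 1)
    (hN : 2 * s < (N : ℝ)) :
    StrictMonoOn (fun γ => PsiNs N s γ) (Set.Icc (0 : ℝ) (((N : ℝ) - 2 * s) / 2)) ∧
    Set.MapsTo (fun γ => PsiNs N s γ) (Set.Icc (0 : ℝ) (((N : ℝ) - 2 * s) / 2))
      (Set.Icc (0 : ℝ) (hardyConst N s)) ∧
    Set.SurjOn (fun γ => PsiNs N s γ) (Set.Icc (0 : ℝ) (((N : ℝ) - 2 * s) / 2))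
      (Set.Icc (0 : ℝ) (hardyConst N s)) ∧
    PsiNs N s (((N : ℝ) - 2 * s) / 2) = hardyConst N s ∧
    Tendsto (fun γ => PsiNs N s γ) (nhdsWithin 0 (Set.Ioi (0 : ℝ))) (nhds 0) :=
  PsiNs_strictMono_surjective_general N s hs0 hN

end
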